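/- arXiv:2411.06936 — 4 statements merged into one kernel-verified Lean document; each statement's English description precedes it below -/
import Mathlib

section
/- Let C be a (v,k,λ) projection n-cube with support S ⊆ {1,...,v}^n. Then any two distinct elements a, b ∈ S have Hamming distance d(a,b) ≥ n − 1; equivalently, a and b agree in at most one coordinate. -/
open Finset

/-- A symmetric (v,k,λ) design: a v×v {0,1}-matrix A with A·Aᵗ = (k-λ)I + λJ. -/
def IsSymDesign (v k lam : ℕ) (A : Matrix (Fin v) (Fin v) ℤ) : Prop :=
  (∀ i j, A i j = 0 ∨ A i j = 1) ∧
  A * A.transpose = (k - lam : ℤ) • (1 : Matrix (Fin v) (Fin v) ℤ) +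
    (lam : ℤ) • Matrix.of (fun _ _ => (1 : ℤ))

/-- The 2-dimensional projection Π_{xy}(C) of an n-dimensional matrix C. -/
def proj (n v : ℕ) (C : (Fin n → Fin v) → ℤ) (x y : Fin n) :
    Matrix (Fin v) (Fin v) ℤ :=
  Matrix.of fun i j =>
    ∑ t ∈ Finset.univ.filter (fun t : Fin n → Fin v => t x = i ∧ t y = j), C t

/-- A (v,k,λ) projection n-cube: a {0,1}-valued n-dimensional matrix all of whose
2-dimensional projections are symmetric (v,k,λ) designs. -/
def IsProjCube (n v k lam : ℕ) (C : (Fin n → Fin v) → ℤ) : Prop :=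
  (∀ t, C t = 0 ∨ C t = 1) ∧
  ∀ x y : Fin n, x < y → IsSymDesign v k lam (proj n v C x y)


lemma projCube_aux (n v k lam : ℕ) (C : (Fin n → Fin v) → ℤ)
    (hC : IsProjCube n v k lam C) (a b : Fin n → Fin v)
    (ha : C a = 1) (hb : C b = 1) (hab : a ≠ b)
    (x y : Fin n) (hxy : x < y) (hax : a x = b x) (hay : a y = b y) : False := by
  obtain ⟨h01, hdes⟩ := hC
  obtain ⟨hent, -⟩ := hdes x y hxy
  have h := hent (a x) (a y)
  have hval : proj n v C x y (a x) (a y) =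
      ∑ t ∈ Finset.univ.filter (fun t : Fin n → Fin v => t x = a x ∧ t y = a y), C t := rfl
  have hsub : ({a, b} : Finset (Fin n → Fin v)) ⊆
      Finset.univ.filter (fun t : Fin n → Fin v => t x = a x ∧ t y = a y) := by
    intro t ht
    simp only [Finset.mem_insert, Finset.mem_singleton] at ht
    rcases ht with rfl | rfl <;> simp [hax.symm, hay.symm]
  have hge : (2 : ℤ) ≤
      ∑ t ∈ Finset.univ.filter (fun t : Fin n → Fin v => t x = a x ∧ t y = a y), C t := by
    calc (2 : ℤ) = ∑ t ∈ ({a, b} : Finset (Fin n → Fin v)), C t := by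
          rw [Finset.sum_pair hab, ha, hb]; norm_num
      _ ≤ _ := Finset.sum_le_sum_of_subset_of_nonneg hsub
          (fun t _ _ => by rcases h01 t with h0 | h0 <;> simp [h0])
  rw [hval] at h
  rcases h with h0 | h0 <;> linarith

theorem projCube_hammingDist (n v k lam : ℕ) (C : (Fin n → Fin v) → ℤ)
    (hC : IsProjCube n v k lam C) (a b : Fin n → Fin v)
    (ha : C a = 1) (hb : C b = 1) (hab : a ≠ b) :
    n - 1 ≤ hammingDist a b := by
  by_contra hcon
  push_neg at hcon
  have hd : hammingDist a b = (Finset.univ.filter fun i => a i ≠ b i).card := rfl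
  have hsplit := Finset.card_filter_add_card_filter_not
    (s := (Finset.univ : Finset (Fin n))) (fun i => a i = b i)
  simp only [Finset.card_univ, Fintype.card_fin] at hsplit
  have hcard2 : 1 < ((Finset.univ : Finset (Fin n)).filter fun i => a i = b i).card := by
    have heq : ((Finset.univ : Finset (Fin n)).filter fun i => ¬ a i = b i).card = hammingDist a b := rfl
    omega
  obtain ⟨x, hx, y, hy, hxy⟩ := Finset.one_lt_card.mp hcard2
  simp only [Finset.mem_filter] at hx hy
  rcases lt_or_gt_of_ne hxy with h | h
  · exact absurd (projCube_aux n v k lam C hC a b ha hb hab x y h hx.2 hy.2) (fun f => f)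
  · exact absurd (projCube_aux n v k lam C hC a b ha hb hab y x h hy.2 hx.2) (fun f => f)
end

section
/- Let q ≡ 3 (mod 4) be a prime power and α a primitive element of the finite field F_q. Then D = {(0, α^{2i}, α^{2i+1}, ..., α^{2i+q-2}) : i = 0,...,(q-3)/2} ⊆ (F_q)^q is a q-dimensional (q, (q-1)/2, (q-3)/4) difference set in the additive group of F_q; i.e., for all 1 ≤ x < y ≤ q, the set of coordinate differences {d_x − d_y : d ∈ D} is a (q, (q-1)/2, (q-3)/4) difference set in (F_q, +). -/
open Finset

/-- A (v,k,λ) difference set in an additive group G: a k-subset D such that every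
nonzero g has exactly λ representations g = d₁ - d₂ with d₁,d₂ ∈ D. -/
def IsAddDiffSet {G : Type*} [AddGroup G] [DecidableEq G] (v k lam : ℕ)
    (D : Finset G) : Prop :=
  D.card = k ∧ ∀ g : G, g ≠ 0 →
    ((D ×ˢ D).filter (fun p => p.1 - p.2 = g)).card = lam

/-- An n-dimensional (v,k,λ) difference set in an additive group G. -/
def IsAddDiffSetN {G : Type*} [AddGroup G] [DecidableEq G] (n v k lam : ℕ)
    (D : Finset (Fin n → G)) : Prop :=
  D.card = k ∧ ∀ x y : Fin n, x < y →
    IsAddDiffSet v k lam (D.image (fun d => d x - d y))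

/-! Write `N(g)` for the number of pairs of nonzero squares with difference `g`. Multiplying
by a nonzero square `s` permutes the nonzero squares, so `N(s g) = N(g)`, and swapping the pair
gives `N(-g) = N(g)`. For `q ≡ 3 (mod 4)` the element `-1` is a nonsquare, so every nonzero `h`
is `± s g` for a nonzero square `s`: `N` is a constant `λ` on `F^×`, and counting all `k²` pairs
gives `(q - 1) λ = k (k - 1)` with `k = (q - 1) / 2`.

The `i`-th point of `D` is `α^{2i} • w` with `w = (0, 1, α, …, α^{q-2})`, and `α^{2i}` runs over
the nonzero squares. So the coordinate differences `d_x - d_y` form the image of the nonzero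
squares under the additive automorphism `t ↦ (w_x - w_y) t`, which preserves difference sets. -/

section DiffCount

variable {G H : Type*} [AddGroup G] [DecidableEq G] [AddGroup H] [DecidableEq H]

def diffCount (D : Finset G) (g : G) : ℕ :=
  ((D ×ˢ D).filter (fun p => p.1 - p.2 = g)).card

theorem diffCount_image_addEquiv (e : G ≃+ H) (D : Finset G) (g : G) :
    diffCount (D.image e) (e g) = diffCount D g := by
  have hprod : D.image e ×ˢ D.image e = (D ×ˢ D).image (Prod.map e e) := by
    ext ⟨a, b⟩
    simp only [mem_product, mem_image, Prod.exists, Prod.map_apply, Prod.mk.injEq]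
    grind
  rw [diffCount, hprod, filter_image, card_image_of_injective _ (e.injective.prodMap e.injective)]
  simp only [Prod.map_fst, Prod.map_snd, ← map_sub, e.injective.eq_iff]
  rfl

theorem diffCount_neg (D : Finset G) (g : G) : diffCount D (-g) = diffCount D g := by
  refine card_nbij' Prod.swap Prod.swap ?_ ?_ (fun _ _ => rfl) (fun _ _ => rfl) <;>
  · rintro ⟨a, b⟩
    simp only [coe_filter, mem_product, Set.mem_ofPred_eq, Prod.swap_prod_mk]
    rw [← neg_sub b a]
    simp only [neg_eq_iff_eq_neg, neg_neg]
    tauto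

theorem diffCount_zero (D : Finset G) : diffCount D 0 = D.card := by
  simp only [diffCount, sub_eq_zero, ← diag_eq_filter, diag_card]

theorem sum_diffCount [Fintype G] (D : Finset G) : ∑ g, diffCount D g = D.card ^ 2 := by
  rw [sq, ← card_product, card_eq_sum_card_fiberwise (fun p _ => mem_univ (p.1 - p.2))]
  rfl

theorem card_sub_one_mul_of_diffCount_eq [Fintype G] {D : Finset G} {lam : ℕ}
    (hD : ∀ g : G, g ≠ 0 → diffCount D g = lam) :
    (Fintype.card G - 1) * lam = D.card * (D.card - 1) := by
  have hsum := sum_diffCount D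
  rw [← add_sum_erase _ _ (mem_univ 0), diffCount_zero,
    sum_congr rfl (fun g hg => hD g (ne_of_mem_erase hg)), sum_const,
    card_erase_of_mem (mem_univ 0), card_univ, smul_eq_mul] at hsum
  rw [Nat.mul_sub_one, ← sq]
  omega

theorem IsAddDiffSet.image_addEquiv {v k lam : ℕ} {D : Finset G} (hD : IsAddDiffSet v k lam D)
    (e : G ≃+ H) : IsAddDiffSet v k lam (D.image e) := by
  refine ⟨(card_image_of_injective _ e.injective).trans hD.1, fun g hg => ?_⟩
  rw [← e.apply_symm_apply g]
  exact (diffCount_image_addEquiv e D _).trans (hD.2 _ (by simpa using hg))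

end DiffCount

section Paley

variable {F : Type*} [Field F] [Fintype F] [DecidableEq F]

variable (F) in
def nonzeroSquares : Finset F := (univ.erase 0).filter IsSquare

theorem mem_nonzeroSquares {x : F} : x ∈ nonzeroSquares F ↔ x ≠ 0 ∧ IsSquare x := by
  simp [nonzeroSquares]

theorem isSquare_neg_iff_not_isSquare (hF : Fintype.card F % 4 = 3) {x : F} (hx : x ≠ 0) :
    IsSquare (-x) ↔ ¬IsSquare x := by
  have hχ : quadraticChar F (-1) = -1 :=
    quadraticChar_neg_one_iff_not_isSquare.mpr (by simp [FiniteField.isSquare_neg_one_iff, hF])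
  rw [← quadraticChar_one_iff_isSquare (neg_ne_zero.mpr hx),
    ← quadraticChar_neg_one_iff_not_isSquare, neg_eq_neg_one_mul, map_mul, hχ, neg_one_mul,
    neg_eq_iff_eq_neg]

theorem card_nonzeroSquares (hF : Fintype.card F % 4 = 3) :
    (nonzeroSquares F).card = (Fintype.card F - 1) / 2 := by
  have hsplit := card_filter_add_card_filter_not (s := univ.erase (0 : F)) IsSquare
  have hneg : ((univ.erase (0 : F)).filter (¬IsSquare ·)).card = (nonzeroSquares F).card := by
    refine card_nbij' Neg.neg Neg.neg (fun x hx => ?_) (fun x hx => ?_)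
      (fun x _ => neg_neg x) (fun x _ => neg_neg x)
    · simp only [coe_filter, mem_erase, mem_univ, and_true, Set.mem_ofPred_eq] at hx
      rw [mem_coe, mem_nonzeroSquares]
      exact ⟨neg_ne_zero.mpr hx.1, (isSquare_neg_iff_not_isSquare hF hx.1).mpr hx.2⟩
    · rw [mem_coe, mem_nonzeroSquares] at hx
      simp only [coe_filter, mem_erase, mem_univ, and_true, Set.mem_ofPred_eq]
      rw [isSquare_neg_iff_not_isSquare hF hx.1, not_not]
      exact ⟨neg_ne_zero.mpr hx.1, hx.2⟩
  rw [hneg, card_erase_of_mem (mem_univ 0), card_univ] at hsplit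
  change (nonzeroSquares F).card + _ = _ at hsplit
  omega

theorem image_mul_nonzeroSquares {s : F} (hs : s ∈ nonzeroSquares F) :
    (nonzeroSquares F).image (s * ·) = nonzeroSquares F := by
  rw [mem_nonzeroSquares] at hs
  refine eq_of_subset_of_card_le (image_subset_iff.mpr fun x hx => ?_)
    (card_image_of_injective _ (mul_right_injective₀ hs.1)).ge
  rw [mem_nonzeroSquares] at hx ⊢
  exact ⟨mul_ne_zero hs.1 hx.1, hs.2.mul hx.2⟩

theorem diffCount_nonzeroSquares_eq (hF : Fintype.card F % 4 = 3) {g h : F} (hg : g ≠ 0)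
    (hh : h ≠ 0) : diffCount (nonzeroSquares F) h = diffCount (nonzeroSquares F) g := by
  have hmul : ∀ s ∈ nonzeroSquares F,
      diffCount (nonzeroSquares F) (s * g) = diffCount (nonzeroSquares F) g := fun s hs => by
    let e := DistribMulAction.toAddEquiv₀ F s (mem_nonzeroSquares.mp hs).1
    have himage : (nonzeroSquares F).image e = nonzeroSquares F := image_mul_nonzeroSquares hs
    have key := diffCount_image_addEquiv e (nonzeroSquares F) g
    rwa [himage] at key
  have hq : h / g ≠ 0 := div_ne_zero hh hg
  by_cases hsq : IsSquare (h / g)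
  · rw [← hmul _ (mem_nonzeroSquares.mpr ⟨hq, hsq⟩), div_mul_cancel₀ h hg]
  · rw [← hmul _ (mem_nonzeroSquares.mpr ⟨neg_ne_zero.mpr hq,
      (isSquare_neg_iff_not_isSquare hF hq).mpr hsq⟩), neg_mul, div_mul_cancel₀ h hg,
      diffCount_neg]

theorem isAddDiffSet_nonzeroSquares (hF : Fintype.card F % 4 = 3) :
    IsAddDiffSet (Fintype.card F) ((Fintype.card F - 1) / 2) ((Fintype.card F - 3) / 4)
      (nonzeroSquares F) := by
  refine ⟨card_nonzeroSquares hF, fun g hg => ?_⟩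
  have hcount := card_sub_one_mul_of_diffCount_eq
    (fun h hh => diffCount_nonzeroSquares_eq hF hg hh)
  rw [card_nonzeroSquares hF] at hcount
  obtain ⟨m, hm⟩ : ∃ m, Fintype.card F = 4 * m + 3 := ⟨Fintype.card F / 4, by omega⟩
  rw [hm, show (4 * m + 3 - 1) / 2 = 2 * m + 1 by omega, Nat.add_sub_cancel,
    show 4 * m + 3 - 1 = (2 * m + 1) * 2 by omega, mul_assoc] at hcount
  change diffCount _ g = _
  rw [hm, show (4 * m + 3 - 3) / 4 = m by omega]
  have := Nat.eq_of_mul_eq_mul_left (by omega) hcount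
  omega

end Paley

theorem IsAddDiffSet.isAddDiffSetN_image_smul {F : Type*} [Field F] [DecidableEq F]
    {n v k lam : ℕ} {S : Finset F} (hS : IsAddDiffSet v k lam S) {w : Fin n → F} (hw0 : w ≠ 0)
    (hw : Function.Injective w) : IsAddDiffSetN n v k lam (S.image (· • w)) := by
  refine ⟨(card_image_of_injective _ (smul_left_injective F hw0)).trans hS.1, fun x y hxy => ?_⟩
  have hc : w x - w y ≠ 0 := sub_ne_zero.mpr (hw.ne hxy.ne)
  rw [image_image]
  convert hS.image_addEquiv (DistribMulAction.toAddEquiv₀ F _ hc) using 2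
  funext s
  change s * w x - s * w y = (w x - w y) * s
  ring

def zeroThenPowers {M : Type*} [Monoid M] [Zero M] (α : M) (n : ℕ) : Fin n → M :=
  fun x => if (x : ℕ) = 0 then 0 else α ^ ((x : ℕ) - 1)

theorem zeroThenPowers_injective {M₀ : Type*} [MonoidWithZero M₀] [NoZeroDivisors M₀]
    {α : M₀} (hα0 : α ≠ 0) {n : ℕ} (hn : n ≤ orderOf α + 1) :
    Function.Injective (zeroThenPowers α n) := by
  intro x y hxy
  have hx := x.isLt
  have hy := y.isLt
  unfold zeroThenPowers at hxy
  split_ifs at hxy with hx0 hy0 hy0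
  · exact Fin.ext (hx0.trans hy0.symm)
  · exact absurd hxy.symm (pow_ne_zero _ hα0)
  · exact absurd hxy (pow_ne_zero _ hα0)
  · have := pow_injOn_Iio_orderOf (x := α) (by simp only [Set.mem_Iio]; omega)
      (by simp only [Set.mem_Iio]; omega) hxy
    exact Fin.ext (by omega)

theorem pow_smul_zeroThenPowers {M₀ : Type*} [MonoidWithZero M₀] (α : M₀) (n i : ℕ) :
    α ^ i • zeroThenPowers α n =
      fun x : Fin n => if (x : ℕ) = 0 then 0 else α ^ (i + (x : ℕ) - 1) := by
  funext x
  simp only [Pi.smul_apply, smul_eq_mul, zeroThenPowers]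
  split_ifs with hx
  · rw [mul_zero]
  · rw [← pow_add]
    congr 1
    omega

section PrimitiveElement

variable {F : Type*} [Field F] [Fintype F] [DecidableEq F] {α : F}

theorem orderOf_eq_card_sub_one_of_forall_pow (hα0 : α ≠ 0)
    (hα : ∀ x : F, x ≠ 0 → ∃ m : ℕ, α ^ m = x) : orderOf α = Fintype.card F - 1 := by
  have hgen : ∀ x : Fˣ, x ∈ Subgroup.zpowers (Units.mk0 α hα0) := fun x => by
    obtain ⟨m, hm⟩ := hα x x.ne_zero
    exact ⟨m, Units.ext (by simpa using hm)⟩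
  rw [← Units.val_mk0 hα0, orderOf_units, orderOf_eq_card_of_forall_mem_zpowers hgen,
    Nat.card_eq_fintype_card, Fintype.card_units]

theorem image_pow_two_mul_range (hq : Odd (Fintype.card F)) (hα0 : α ≠ 0)
    (hα : ∀ x : F, x ≠ 0 → ∃ m : ℕ, α ^ m = x) :
    (range ((Fintype.card F - 1) / 2)).image (fun i => α ^ (2 * i)) = nonzeroSquares F := by
  ext x
  simp only [mem_image, mem_range, mem_nonzeroSquares]
  constructor
  · rintro ⟨i, -, rfl⟩
    exact ⟨pow_ne_zero _ hα0, ⟨α ^ i, by rw [← pow_add, two_mul]⟩⟩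
  · rintro ⟨hx0, y, rfl⟩
    obtain ⟨m, rfl⟩ := hα y (left_ne_zero_of_mul hx0)
    obtain ⟨r, hr⟩ := hq
    have hr0 : 0 < r := by have := Fintype.one_lt_card (α := F); omega
    have hαr : α ^ (2 * r) = 1 := by
      rw [show 2 * r = Fintype.card F - 1 by omega, FiniteField.pow_card_sub_one_eq_one α hα0]
    refine ⟨m % r, by have := Nat.mod_lt m hr0; omega, ?_⟩
    calc α ^ (2 * (m % r)) = α ^ (2 * (m % r)) * (α ^ (2 * r)) ^ (m / r) := by
          rw [hαr, one_pow, mul_one]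
      _ = α ^ m * α ^ m := by
          rw [← pow_mul, ← pow_add, ← pow_add]
          congr 1
          linarith [Nat.mod_add_div m r]

end PrimitiveElement

theorem paley_qdim_diffSet {F : Type*} [Field F] [Fintype F] [DecidableEq F]
    (q : ℕ) (hq : Fintype.card F = q) (h4 : q % 4 = 3)
    (α : F) (hα : ∀ x : F, x ≠ 0 → ∃ m : ℕ, α ^ m = x) :
    IsAddDiffSetN q q ((q - 1) / 2) ((q - 3) / 4)
      ((Finset.range ((q - 3) / 2 + 1)).image
        (fun i => fun x : Fin q =>
          if (x : ℕ) = 0 then (0 : F) else α ^ (2 * i + (x : ℕ) - 1))) := by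
  subst hq
  have hα0 : α ≠ 0 := by
    rintro rfl
    obtain ⟨m, hm⟩ := hα (-1) (neg_ne_zero.mpr one_ne_zero)
    have hns : ¬IsSquare (-1 : F) := by rw [FiniteField.isSquare_neg_one_iff]; omega
    rcases m with _ | m
    · rw [pow_zero] at hm
      exact hns (hm ▸ IsSquare.one)
    · simp at hm
  have hw0 : zeroThenPowers α (Fintype.card F) ≠ 0 := fun h => by
    simpa [zeroThenPowers] using congrFun h ⟨1, by omega⟩
  have hw := zeroThenPowers_injective hα0 (n := Fintype.card F)
    (by rw [orderOf_eq_card_sub_one_of_forall_pow hα0 hα]; omega)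
  have hD := (isAddDiffSet_nonzeroSquares h4).isAddDiffSetN_image_smul hw0 hw
  rw [← image_pow_two_mul_range (Nat.odd_iff.mpr (by omega)) hα0 hα, image_image] at hD
  simp only [Function.comp_def, pow_smul_zeroThenPowers] at hD
  rwa [show (Fintype.card F - 3) / 2 + 1 = (Fintype.card F - 1) / 2 by omega]
end

section
/- Suppose q and q+2 are both odd prime powers, let α, β be primitive elements of F_q and F_{q+2}, and let G = F_q × F_{q+2}. Then D' = E'_1 ∪ E'_2 ∪ E_3 is a (4m−1, 2m−1, m−1) difference set in G with m = (q+1)²/4, where E'_1 = {(α^{2i}, β^{2j+1})}, E'_2 = {(α^{2i+1}, β^{2j})} for i = 0,...,(q−3)/2, j = 0,...,(q−1)/2, and E_3 = {(0,0)} ∪ {(α^i, 0) : i = 0,...,q−2}. -/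
open Finset

/-!
Write `χ`, `χ'` for the quadratic characters of `F`, `F'` and `δ` for the indicator of `0`. The
powers `α ^ (2 * i)` run over the nonzero squares, so `D' = {(x, y) | y = 0 ∨ χ x * χ' y = -1}`,
whose `±1`-indicator is `1 ⊗ δ - δ ⊗ 1 + δ ⊗ δ - χ ⊗ χ'`. Correlation is bilinear and
multiplicative on such products, and on one field the correlations of `1`, `δ` and `χ` are
explicit; the only non-trivial one, `∑ x, χ x * χ (x + a) = -1` for `a ≠ 0`, is a Jacobi sum.
Since one of `q`, `q + 2` is `1` and the other `3` modulo 4, `χ (-1) * χ' (-1) = -1`, and then the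
`±1`-indicator has autocorrelation `-1` at every nonzero shift; in a group of order `4m - 1` this
characterises the `(4m - 1, 2m - 1, m - 1)` difference sets.
-/

section Correlation

variable {G H R : Type*} [Fintype G] [Fintype H] [CommRing R]

def prodMul (u : G → R) (v : H → R) (z : G × H) : R := u z.1 * v z.2

@[simp] lemma sum_prodMul (u : G → R) (v : H → R) :
    ∑ z, prodMul u v z = (∑ x, u x) * ∑ y, v y := by
  simp only [prodMul, Fintype.sum_prod_type, sum_mul_sum]

variable [AddGroup G] [AddGroup H]

def corr (u v : G → R) (g : G) : R := ∑ x, u x * v (x + g)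

@[simp] lemma corr_add_left (u u' v : G → R) (g : G) :
    corr (u + u') v g = corr u v g + corr u' v g := by
  simp only [corr, Pi.add_apply, add_mul, sum_add_distrib]

@[simp] lemma corr_sub_left (u u' v : G → R) (g : G) :
    corr (u - u') v g = corr u v g - corr u' v g := by
  simp only [corr, Pi.sub_apply, sub_mul, sum_sub_distrib]

@[simp] lemma corr_add_right (u v v' : G → R) (g : G) :
    corr u (v + v') g = corr u v g + corr u v' g := by
  simp only [corr, Pi.add_apply, mul_add, sum_add_distrib]

@[simp] lemma corr_sub_right (u v v' : G → R) (g : G) :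
    corr u (v - v') g = corr u v g - corr u v' g := by
  simp only [corr, Pi.sub_apply, mul_sub, sum_sub_distrib]

@[simp] lemma corr_one_left (v : G → R) (g : G) : corr 1 v g = ∑ x, v x := by
  simp only [corr, Pi.one_apply, one_mul]
  exact Equiv.sum_comp (Equiv.addRight g) v

@[simp] lemma corr_one_right (u : G → R) (g : G) : corr u 1 g = ∑ x, u x := by
  simp only [corr, Pi.one_apply, mul_one]

@[simp] lemma corr_single_left [DecidableEq G] (v : G → R) (g : G) :
    corr (Pi.single 0 1) v g = v g := by
  simp [corr, Pi.single_apply]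

@[simp] lemma corr_single_right [DecidableEq G] (u : G → R) (g : G) :
    corr u (Pi.single 0 1) g = u (-g) := by
  simp [corr, Pi.single_apply, add_eq_zero_iff_eq_neg]

@[simp] lemma corr_prodMul (u v : G → R) (u' v' : H → R) (a : G) (b : H) :
    corr (prodMul u u') (prodMul v v') (a, b) = corr u v a * corr u' v' b := by
  simp only [corr, prodMul, Fintype.sum_prod_type, Prod.fst_add, Prod.snd_add, sum_mul_sum]
  exact sum_congr rfl fun x _ => sum_congr rfl fun y _ => by ring

end Correlation

section HadamardDifferenceSet

variable {G : Type*} [Fintype G] [DecidableEq G]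

def signIndicator (D : Finset G) (z : G) : ℤ := if z ∈ D then 1 else -1

lemma sum_signIndicator (D : Finset G) : ∑ z, signIndicator D z = 2 * #D - Fintype.card G := by
  have hcard := card_filter_add_card_filter_not (s := univ) (· ∈ D)
  simp only [filter_mem_eq_inter, univ_inter, card_univ] at hcard
  simp [signIndicator, sum_ite]
  omega

variable [AddCommGroup G]

lemma card_filter_sub_eq_card_filter_mem_add (D : Finset G) (g : G) :
    #((D ×ˢ D).filter (fun p => p.1 - p.2 = g)) = #(univ.filter (fun z => z ∈ D ∧ z + g ∈ D)) := by
  refine card_bij' (fun p _ => p.2) (fun z _ => (z + g, z)) ?_ ?_ ?_ ?_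
  · rintro ⟨d₁, d₂⟩ h
    simp only [mem_filter, mem_product] at h
    obtain ⟨⟨h₁, h₂⟩, rfl⟩ := h
    simpa [h₂] using h₁
  · intro z hz
    simpa [and_comm] using hz
  · rintro ⟨d₁, d₂⟩ h
    simp only [mem_filter, mem_product] at h
    obtain ⟨-, rfl⟩ := h
    simp
  · intro z _
    rfl

lemma corr_signIndicator (D : Finset G) (g : G) :
    corr (signIndicator D) (signIndicator D) g =
      4 * #((D ×ˢ D).filter (fun p => p.1 - p.2 = g)) - 4 * #D + Fintype.card G := by
  set ι : G → ℤ := fun z => if z ∈ D then 1 else 0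
  have hsign : signIndicator D = ι + ι - 1 := by
    ext z
    by_cases hz : z ∈ D <;> simp [signIndicator, ι, hz]
  have hιι : corr ι ι g = #((D ×ˢ D).filter (fun p => p.1 - p.2 = g)) := by
    simp only [corr, ι, ite_zero_mul_ite_zero, mul_one, sum_boole,
      card_filter_sub_eq_card_filter_mem_add]
  have hι : ∑ z, ι z = #D := by
    simp [ι]
  simp only [hsign, corr_add_left, corr_add_right, corr_sub_left, corr_sub_right, hιι,
    corr_one_left, corr_one_right, Pi.add_apply, Pi.sub_apply, Pi.one_apply, sum_add_distrib,
    sum_sub_distrib, hι, sum_const, card_univ, nsmul_eq_mul, mul_one]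
  ring

theorem isAddDiffSet_of_corr_signIndicator (D : Finset G) {m : ℕ}
    (hG : Fintype.card G + 1 = 4 * m) (hsum : ∑ z, signIndicator D z = -1)
    (hcorr : ∀ g ≠ 0, corr (signIndicator D) (signIndicator D) g = -1) :
    IsAddDiffSet (4 * m - 1) (2 * m - 1) (m - 1) D := by
  rw [sum_signIndicator] at hsum
  refine ⟨by omega, fun g hg => ?_⟩
  have := hcorr g hg
  rw [corr_signIndicator] at this
  omega

end HadamardDifferenceSet

section QuadraticChar

variable {K : Type*} [Field K] [Fintype K] [DecidableEq K]

lemma corr_quadraticChar_self (hK : ringChar K ≠ 2) (a : K) :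
    corr (quadraticChar K) (quadraticChar K) a =
      if a = 0 then (Fintype.card K : ℤ) - 1 else -1 := by
  set χ := quadraticChar K
  split_ifs with ha
  · have hsq : ∀ x ∈ univ.erase (0 : K), χ x * χ (x + 0) = 1 := fun x hx => by
      rw [add_zero, ← sq, quadraticChar_sq_one (ne_of_mem_erase hx)]
    rw [ha, corr, ← sum_erase_add _ _ (mem_univ 0), sum_congr rfl hsq, sum_const,
      card_erase_of_mem (mem_univ 0), card_univ, MulChar.map_zero, zero_mul, add_zero, nsmul_one,
      Nat.cast_sub Fintype.card_pos, Nat.cast_one]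
  · have hJ := jacobiSum_nontrivial_inv (quadraticChar_ne_one hK)
    rw [(quadraticChar_isQuadratic K).inv] at hJ
    -- substitute `x = -a * t` to reach the Jacobi sum `∑ t, χ t * χ (1 - t)`
    calc corr χ χ a = ∑ t, χ (-a * t) * χ (-a * t + a) :=
          (Equiv.sum_comp (Equiv.mulLeft₀ (-a) (neg_ne_zero.mpr ha)) _).symm
      _ = χ (-1) * χ a ^ 2 * jacobiSum χ χ := by
          rw [jacobiSum, mul_sum]
          refine sum_congr rfl fun t _ => ?_
          rw [show -a * t + a = a * (1 - t) by ring, show -a * t = -1 * a * t by ring]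
          simp only [map_mul]
          ring
      _ = -1 := by
          rw [hJ, quadraticChar_sq_one ha, mul_one, mul_neg, ← sq,
            quadraticChar_sq_one (neg_ne_zero.mpr one_ne_zero)]

variable {L : Type*} [Field L] [Fintype L] [DecidableEq L]

lemma quadraticChar_neg_one_mul_of_card_eq_add_two (hK : ringChar K ≠ 2) (hL : ringChar L ≠ 2)
    (hKL : Fintype.card L = Fintype.card K + 2) :
    quadraticChar K (-1) * quadraticChar L (-1) = -1 := by
  have hodd := FiniteField.odd_card_of_char_ne_two hK
  rw [quadraticChar_neg_one hK, quadraticChar_neg_one hL, hKL]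
  rcases Nat.odd_mod_four_iff.mp hodd with h | h
  · rw [ZMod.χ₄_nat_one_mod_four h, ZMod.χ₄_nat_three_mod_four (by omega)]
    rfl
  · rw [ZMod.χ₄_nat_three_mod_four h, ZMod.χ₄_nat_one_mod_four (by omega)]
    rfl

end QuadraticChar

section Generator

variable {K : Type*} [Field K] [Fintype K] [DecidableEq K] {γ : K}

lemma quadraticChar_eq_neg_one_of_forall_pow (hK : ringChar K ≠ 2)
    (hγ : ∀ x : K, x ≠ 0 → ∃ m : ℕ, γ ^ m = x) : quadraticChar K γ = -1 := by
  obtain ⟨c, hc⟩ := quadraticChar_exists_neg_one hK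
  obtain ⟨m, rfl⟩ := hγ c fun h => by simp [h] at hc
  rw [map_pow] at hc
  rcases (quadraticChar_isQuadratic K) γ with h | h | h
  · rw [h] at hc
    rcases m with _ | m <;> simp at hc
  · rw [h, one_pow] at hc
    norm_num at hc
  · exact h

lemma mem_image_pow_range_iff (hγ : ∀ x : K, x ≠ 0 → ∃ m : ℕ, γ ^ m = x) (hγ0 : γ ≠ 0) {N : ℕ}
    (hN : Fintype.card K = N + 1) (x : K) : x ∈ (range N).image (γ ^ ·) ↔ x ≠ 0 := by
  have hγN : γ ^ N = 1 := by
    simpa [hN] using FiniteField.pow_card_sub_one_eq_one γ hγ0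
  refine ⟨?_, fun hx => ?_⟩
  · intro hx
    obtain ⟨i, -, rfl⟩ := mem_image.mp hx
    exact pow_ne_zero i hγ0
  · obtain ⟨m, rfl⟩ := hγ x hx
    have hNpos : 0 < N := by have := Fintype.one_lt_card (α := K); omega
    exact mem_image.mpr ⟨m % N, mem_range.mpr (Nat.mod_lt m hNpos), (pow_eq_pow_mod m hγN).symm⟩

lemma mem_singleton_zero_union_image_pow_range_iff {L : Type*} [Zero L] [DecidableEq L]
    (hγ : ∀ x : K, x ≠ 0 → ∃ m : ℕ, γ ^ m = x) (hγ0 : γ ≠ 0) {N : ℕ}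
    (hN : Fintype.card K = N + 1) (z : K × L) :
    z ∈ {(0, 0)} ∪ (range N).image (fun i => (γ ^ i, 0)) ↔ z.2 = 0 := by
  obtain ⟨x, y⟩ := z
  rw [mem_union, mem_singleton, Prod.mk.injEq, mem_image]
  constructor
  · rintro (⟨-, h⟩ | ⟨i, -, h⟩)
    · exact h
    · exact (Prod.mk.inj h).2.symm
  · rintro rfl
    by_cases hx : x = 0
    · exact Or.inl ⟨hx, rfl⟩
    obtain ⟨i, hi, rfl⟩ := mem_image.mp ((mem_image_pow_range_iff hγ hγ0 hN x).mpr hx)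
    exact Or.inr ⟨i, hi, rfl⟩

lemma mem_image_pow_two_mul_add_iff (hK : ringChar K ≠ 2)
    (hγ : ∀ x : K, x ≠ 0 → ∃ m : ℕ, γ ^ m = x) {n : ℕ} (hn : Fintype.card K = 2 * n + 1) {r : ℕ}
    (hr : r < 2) (x : K) :
    x ∈ (range n).image (fun i => γ ^ (2 * i + r)) ↔ quadraticChar K x = (-1) ^ r := by
  have hχγ := quadraticChar_eq_neg_one_of_forall_pow hK hγ
  have hγ0 : γ ≠ 0 := fun h => by simp [h] at hχγ
  refine ⟨?_, fun hx => ?_⟩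
  · intro hx
    obtain ⟨i, -, rfl⟩ := mem_image.mp hx
    rw [map_pow, hχγ, pow_add, pow_mul, neg_one_sq, one_pow, one_mul]
  · have hx0 : x ≠ 0 := by
      rintro rfl
      rw [MulChar.map_zero] at hx
      exact pow_ne_zero r (by norm_num) hx.symm
    obtain ⟨j, hj, rfl⟩ := mem_image.mp ((mem_image_pow_range_iff hγ hγ0 hn x).mpr hx0)
    rw [map_pow, hχγ, neg_one_pow_eq_pow_mod_two, neg_one_pow_eq_pow_mod_two (n := r)] at hx
    have hjr : j % 2 = r := by
      rw [Nat.mod_eq_of_lt hr] at hx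
      rcases Nat.mod_two_eq_zero_or_one j with h | h <;> interval_cases r <;> simp [h] at hx ⊢
    exact mem_image.mpr ⟨j / 2, by simp at hj ⊢; omega, by rw [← hjr, Nat.div_add_mod]⟩

end Generator

section TwinPrimePower

variable (K L : Type*) [Field K] [Fintype K] [DecidableEq K] [Field L] [Fintype L] [DecidableEq L]

def twinPrimePowerSet : Finset (K × L) :=
  univ.filter fun z => z.2 = 0 ∨ quadraticChar K z.1 * quadraticChar L z.2 = -1

lemma signIndicator_twinPrimePowerSet :
    signIndicator (twinPrimePowerSet K L) =
      prodMul 1 (Pi.single 0 1) - prodMul (Pi.single 0 1) 1 +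
        prodMul (Pi.single 0 1) (Pi.single 0 1) -
          prodMul (quadraticChar K) (quadraticChar L) := by
  ext ⟨x, y⟩
  by_cases hy : y = 0
  · by_cases hx : x = 0 <;> simp [signIndicator, twinPrimePowerSet, prodMul, hx, hy]
  by_cases hx : x = 0
  · simp [signIndicator, twinPrimePowerSet, prodMul, hx, hy]
  rcases quadraticChar_dichotomy hx with h | h <;>
    rcases quadraticChar_dichotomy hy with h' | h' <;>
    simp [signIndicator, twinPrimePowerSet, prodMul, hx, hy, h, h', -quadraticChar_apply]

variable {K L}

lemma sum_signIndicator_twinPrimePowerSet (hK : ringChar K ≠ 2)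
    (hKL : Fintype.card L = Fintype.card K + 2) :
    ∑ z, signIndicator (twinPrimePowerSet K L) z = -1 := by
  simp [signIndicator_twinPrimePowerSet, sum_add_distrib, sum_sub_distrib,
    quadraticChar_sum_zero hK, hKL, -quadraticChar_apply]

lemma corr_signIndicator_twinPrimePowerSet (hK : ringChar K ≠ 2) (hL : ringChar L ≠ 2)
    (hKL : Fintype.card L = Fintype.card K + 2) {z : K × L} (hz : z ≠ 0) :
    corr (signIndicator (twinPrimePowerSet K L)) (signIndicator (twinPrimePowerSet K L)) z =
      -1 := by
  obtain ⟨a, b⟩ := z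
  simp only [signIndicator_twinPrimePowerSet, corr_add_left, corr_sub_left, corr_add_right,
    corr_sub_right, corr_prodMul, corr_one_left, corr_one_right, corr_single_left,
    corr_single_right, corr_quadraticChar_self hK, corr_quadraticChar_self hL,
    quadraticChar_sum_zero hK, quadraticChar_sum_zero hL, Pi.one_apply, sum_const, card_univ,
    nsmul_one, sum_pi_single', mem_univ, if_true, hKL]
  have hsign := quadraticChar_neg_one_mul_of_card_eq_add_two hK hL hKL
  rcases eq_or_ne a 0 with rfl | ha <;> rcases eq_or_ne b 0 with rfl | hb
  · exact absurd rfl hz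
  · simp [hb, MulChar.map_zero, -quadraticChar_apply]
    ring
  · simp [ha, MulChar.map_zero, -quadraticChar_apply]
    ring
  · simp [ha, hb, -quadraticChar_apply]
    rw [neg_eq_neg_one_mul a, neg_eq_neg_one_mul b, map_mul, map_mul]
    linear_combination -(quadraticChar K a * quadraticChar L b) * hsign

theorem isAddDiffSet_twinPrimePowerSet (hK : ringChar K ≠ 2) (hL : ringChar L ≠ 2)
    (hKL : Fintype.card L = Fintype.card K + 2) {m : ℕ} (hm : (Fintype.card K + 1) ^ 2 = 4 * m) :
    IsAddDiffSet (4 * m - 1) (2 * m - 1) (m - 1) (twinPrimePowerSet K L) :=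
  isAddDiffSet_of_corr_signIndicator _ (by rw [Fintype.card_prod, hKL, ← hm]; ring)
    (sum_signIndicator_twinPrimePowerSet hK hKL)
    fun _ hz => corr_signIndicator_twinPrimePowerSet hK hL hKL hz

lemma union_image_pow_eq_twinPrimePowerSet (hK : ringChar K ≠ 2) (hL : ringChar L ≠ 2) {γ : K}
    {δ : L} (hγ : ∀ x : K, x ≠ 0 → ∃ m : ℕ, γ ^ m = x) (hδ : ∀ y : L, y ≠ 0 → ∃ m : ℕ, δ ^ m = y)
    {n : ℕ} (hn : Fintype.card K = 2 * n + 1) (hn' : Fintype.card L = 2 * (n + 1) + 1) :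
    ((range n ×ˢ range (n + 1)).image
        (Prod.map (fun i => γ ^ (2 * i)) (fun j => δ ^ (2 * j + 1))) ∪
      (range n ×ˢ range (n + 1)).image
        (Prod.map (fun i => γ ^ (2 * i + 1)) (fun j => δ ^ (2 * j))) ∪
      ({(0, 0)} ∪ (range (2 * n)).image (fun i => (γ ^ i, 0)))) = twinPrimePowerSet K L := by
  have hγ0 : γ ≠ 0 := fun h => by simpa [h] using quadraticChar_eq_neg_one_of_forall_pow hK hγ
  have hK0 := mem_image_pow_two_mul_add_iff hK hγ hn (r := 0) two_pos
  have hL0 := mem_image_pow_two_mul_add_iff hL hδ hn' (r := 0) two_pos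
  simp only [add_zero, pow_zero] at hK0 hL0
  ext ⟨x, y⟩
  rw [prodMap_image_product, prodMap_image_product, mem_union, mem_union,
    mem_singleton_zero_union_image_pow_range_iff hγ hγ0 hn, mem_product, mem_product, hK0, hL0,
    mem_image_pow_two_mul_add_iff hK hγ hn one_lt_two,
    mem_image_pow_two_mul_add_iff hL hδ hn' one_lt_two, pow_one,
    twinPrimePowerSet, mem_filter, Int.mul_eq_neg_one_iff_eq_one_or_neg_one]
  simp only [mem_univ, true_and]
  tauto

end TwinPrimePower

theorem twin_prime_power_diffSet_variant
    {F F' : Type*} [Field F] [Fintype F] [DecidableEq F]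
    [Field F'] [Fintype F'] [DecidableEq F']
    (q : ℕ) (hodd : Odd q) (hq : Fintype.card F = q) (hq' : Fintype.card F' = q + 2)
    (α : F) (hα : ∀ x : F, x ≠ 0 → ∃ m : ℕ, α ^ m = x)
    (β : F') (hβ : ∀ x : F', x ≠ 0 → ∃ m : ℕ, β ^ m = x)
    (m : ℕ) (hm : m = (q + 1) ^ 2 / 4)
    (E1' E2' E3 D' : Finset (F × F'))
    (hE1 : E1' = ((Finset.range ((q - 1) / 2)) ×ˢ (Finset.range ((q + 1) / 2))).image
      (fun p => (α ^ (2 * p.1), β ^ (2 * p.2 + 1))))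
    (hE2 : E2' = ((Finset.range ((q - 1) / 2)) ×ˢ (Finset.range ((q + 1) / 2))).image
      (fun p => (α ^ (2 * p.1 + 1), β ^ (2 * p.2))))
    (hE3 : E3 = {((0 : F), (0 : F'))} ∪
      (Finset.range (q - 1)).image (fun i => (α ^ i, (0 : F'))))
    (hD : D' = E1' ∪ E2' ∪ E3) :
    IsAddDiffSet (4 * m - 1) (2 * m - 1) (m - 1) D' := by
  obtain ⟨t, rfl⟩ := hodd
  have hF : ringChar F ≠ 2 := by rw [Ne, FiniteField.even_card_iff_char_two, hq]; omega
  have hF' : ringChar F' ≠ 2 := by rw [Ne, FiniteField.even_card_iff_char_two, hq']; omega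
  have ht : (2 * t + 1 - 1) / 2 = t ∧ (2 * t + 1 + 1) / 2 = t + 1 ∧ 2 * t + 1 - 1 = 2 * t := by
    omega
  rw [ht.1, ht.2.1] at hE1 hE2
  rw [ht.2.2] at hE3
  have hD' : D' = twinPrimePowerSet F F' := by
    rw [hD, hE1, hE2, hE3]
    exact union_image_pow_eq_twinPrimePowerSet hF hF' hα hβ hq (by omega)
  rw [hD']
  refine isAddDiffSet_twinPrimePowerSet hF hF' (by rw [hq, hq']) ?_
  rw [hm, hq, show (2 * t + 1 + 1) ^ 2 = 4 * (t + 1) ^ 2 by ring,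
    Nat.mul_div_cancel_left _ four_pos]
end

section
/- There is no (3,2,1) projection n-cube for n ≥ 6, and a (3,2,1) projection 5-cube exists; explicitly, the set {(1,1,1,1,1), (1,2,2,2,2), (2,1,2,3,3), (2,3,3,1,2), (3,2,3,3,1), (3,3,1,2,3)} ⊆ {1,2,3}⁵ is the support of a (3,2,1) projection 5-cube. -/
open Finset

/-!
Let `S` be the support of a `(v,k,λ)` projection cube with `λ(v-1) = k(k-1)`. Every hyperplane
`{t | t x = i}` meets `S` in exactly `k` points: these are the row and column sums of a
projection, the row sums read off the diagonal of `A Aᵀ`, the column sums forced by equality in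
Cauchy–Schwarz. Since the projections are `{0,1}`-matrices, two points of `S` agree in at most
one coordinate. Fixing `t₀ ∈ S`, the points of `S \ {t₀}` agreeing with `t₀` at `x` are then
`k - 1` points for each of the `n` coordinates, pairwise distinct, so `n(k-1) ≤ vk - 1`; for
`(3,2,1)` this is `n ≤ 5`. The explicit 5-cube is verified by computation.
-/

namespace IsSymDesign

variable {v k lam : ℕ} {A : Matrix (Fin v) (Fin v) ℤ}

theorem mul_transpose_apply (hA : IsSymDesign v k lam A) (i i' : Fin v) :
    (A * A.transpose) i i' = (if i = i' then (k - lam : ℤ) else 0) + lam := by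
  rw [hA.2]
  simp only [Matrix.add_apply, Matrix.smul_apply, Matrix.one_apply, Matrix.of_apply, smul_eq_mul]
  split_ifs <;> ring

theorem row_sum (hA : IsSymDesign v k lam A) (i : Fin v) : ∑ j, A i j = k := by
  have hdiag := hA.mul_transpose_apply i i
  have hsq : ∀ j, A i j * A i j = A i j := fun j => by
    rcases hA.1 i j with h | h <;> simp [h]
  simpa [Matrix.mul_apply, hsq] using hdiag

theorem sum_sq_col_sum (hA : IsSymDesign v k lam A) :
    ∑ j, (∑ i, A i j) ^ 2 = (k - lam) * v + lam * v ^ 2 := by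
  have hgram : ∑ i, ∑ i', (A * A.transpose) i i' = ∑ j, (∑ i, A i j) ^ 2 := by
    simp only [Matrix.mul_apply, Matrix.transpose_apply, sq, Finset.sum_mul_sum]
    conv_rhs => rw [Finset.sum_comm]
    exact Finset.sum_congr rfl fun _ _ => Finset.sum_comm
  rw [← hgram]
  simp only [hA.mul_transpose_apply, Finset.sum_add_distrib, Finset.sum_ite_eq, mem_univ,
    if_true, Finset.sum_const, Finset.card_univ, Fintype.card_fin, nsmul_eq_mul]
  ring

theorem col_sum (hA : IsSymDesign v k lam A) (hparam : (lam : ℤ) * (v - 1) = k * (k - 1))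
    (j : Fin v) : ∑ i, A i j = k := by
  set c : Fin v → ℤ := fun j => ∑ i, A i j
  have htotal : ∑ j, c j = v * k := by
    simp only [c]
    rw [Finset.sum_comm]
    simp [hA.row_sum]
  have hdev : ∑ j, (c j - k) ^ 2 = 0 := by
    have hsq : ∑ j, c j ^ 2 = (k - lam) * v + lam * v ^ 2 := hA.sum_sq_col_sum
    simp only [sub_sq, Finset.sum_add_distrib, Finset.sum_sub_distrib, ← Finset.sum_mul,
      ← Finset.mul_sum, htotal, hsq, Finset.sum_const, Finset.card_univ, Fintype.card_fin,
      nsmul_eq_mul]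
    linear_combination (v : ℤ) * hparam
  have := (Finset.sum_eq_zero_iff_of_nonneg fun j _ => sq_nonneg (c j - k)).mp hdev j
    (Finset.mem_univ j)
  simpa [c, sub_eq_zero] using this

end IsSymDesign

def cubeSupport {n v : ℕ} (C : (Fin n → Fin v) → ℤ) : Finset (Fin n → Fin v) := {t | C t = 1}

section Projection

variable {n v : ℕ} (C : (Fin n → Fin v) → ℤ)

theorem sum_proj_row (x y : Fin n) (i : Fin v) :
    ∑ j, proj n v C x y i j = ∑ t with t x = i, C t := by
  simp only [proj, Matrix.of_apply, ← Finset.sum_fiberwise {t | t x = i} (fun t => t y) C,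
    Finset.filter_filter]

theorem sum_proj_col (x y : Fin n) (j : Fin v) :
    ∑ i, proj n v C x y i j = ∑ t with t y = j, C t := by
  simp only [proj, Matrix.of_apply, ← Finset.sum_fiberwise {t | t y = j} (fun t => t x) C,
    Finset.filter_filter, and_comm]

theorem sum_filter_eq_card_cubeSupport (h01 : ∀ t, C t = 0 ∨ C t = 1)
    (p : (Fin n → Fin v) → Prop) [DecidablePred p] :
    ∑ t with p t, C t = #{t ∈ cubeSupport C | p t} := by
  have hbool : ∀ t, C t = if C t = 1 then 1 else 0 := fun t => by
    rcases h01 t with h | h <;> simp [h]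
  rw [Finset.sum_congr rfl fun t _ => hbool t, Finset.sum_boole, cubeSupport,
    Finset.filter_filter, Finset.filter_filter]
  simp_rw [and_comm]

end Projection

namespace IsProjCube

variable {n v k lam : ℕ} {C : (Fin n → Fin v) → ℤ}

theorem card_fiber (hC : IsProjCube n v k lam C) (hparam : (lam : ℤ) * (v - 1) = k * (k - 1))
    {x y : Fin n} (hxy : x ≠ y) (i : Fin v) : #{t ∈ cubeSupport C | t x = i} = k := by
  have hsum : ∑ t with t x = i, C t = k := by
    rcases hxy.lt_or_gt with hlt | hgt
    · rw [← sum_proj_row C x y, (hC.2 x y hlt).row_sum]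
    · rw [← sum_proj_col C y x, (hC.2 y x hgt).col_sum hparam]
  rw [sum_filter_eq_card_cubeSupport C hC.1] at hsum
  exact_mod_cast hsum

theorem card_cubeSupport (hC : IsProjCube n v k lam C)
    (hparam : (lam : ℤ) * (v - 1) = k * (k - 1)) {x y : Fin n} (hxy : x ≠ y) :
    #(cubeSupport C) = v * k := by
  rw [Finset.card_eq_sum_card_fiberwise (f := fun t => t x) (t := univ) fun _ _ => mem_univ _]
  simp [hC.card_fiber hparam hxy]

theorem card_cell_le_one (hC : IsProjCube n v k lam C) {x y : Fin n} (hxy : x < y)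
    (i j : Fin v) : #{t ∈ cubeSupport C | t x = i ∧ t y = j} ≤ 1 := by
  have hcell : proj n v C x y i j = #{t ∈ cubeSupport C | t x = i ∧ t y = j} := by
    simp only [proj, Matrix.of_apply]
    exact sum_filter_eq_card_cubeSupport C hC.1 _
  have := (hC.2 x y hxy).1 i j
  omega

theorem eq_of_apply_eq_of_apply_eq (hC : IsProjCube n v k lam C) {x y : Fin n} (hxy : x ≠ y)
    {s t : Fin n → Fin v} (hs : s ∈ cubeSupport C) (ht : t ∈ cubeSupport C)
    (hx : s x = t x) (hy : s y = t y) : s = t := by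
  wlog hlt : x < y generalizing x y
  · exact this hxy.symm hy hx (hxy.lt_or_gt.resolve_left hlt)
  exact Finset.card_le_one.mp (hC.card_cell_le_one hlt (t x) (t y)) s
    (by simp [hs, hx, hy]) t (by simp [ht])

theorem mul_sub_one_add_one_le (hC : IsProjCube n v k lam C)
    (hparam : (lam : ℤ) * (v - 1) = k * (k - 1)) (hn : 2 ≤ n) (hv : 0 < v) (hk : 0 < k) :
    n * (k - 1) + 1 ≤ v * k := by
  have : Nontrivial (Fin n) := Fin.nontrivial_iff_two_le.mpr hn
  obtain ⟨x₀, y₀, h₀⟩ := exists_pair_ne (Fin n)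
  have hS := hC.card_cubeSupport hparam h₀
  obtain ⟨t₀, ht₀⟩ : (cubeSupport C).Nonempty := Finset.card_pos.mp (hS ▸ Nat.mul_pos hv hk)
  set F : Fin n → Finset (Fin n → Fin v) := fun x => {t ∈ (cubeSupport C).erase t₀ | t x = t₀ x}
  have hF : ∀ x, #(F x) = k - 1 := fun x => by
    simp only [F]
    obtain ⟨y, hxy⟩ := exists_ne x
    rw [Finset.filter_erase, Finset.card_erase_of_mem (by simp [ht₀]),
      hC.card_fiber hparam hxy.symm]
  have hdisj : (↑(univ : Finset (Fin n)) : Set (Fin n)).PairwiseDisjoint F := by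
    intro x _ y _ hxy
    refine Finset.disjoint_left.mpr fun t htx hty => ?_
    simp only [F, Finset.mem_filter, Finset.mem_erase] at htx hty
    exact htx.1.1 (hC.eq_of_apply_eq_of_apply_eq hxy htx.1.2 ht₀ htx.2 hty.2)
  calc n * (k - 1) + 1 = #(univ.biUnion F) + 1 := by
        simp [Finset.card_biUnion hdisj, hF]
    _ ≤ #((cubeSupport C).erase t₀) + 1 := by
        gcongr
        exact Finset.biUnion_subset.mpr fun x _ => Finset.filter_subset _ _
    _ = v * k := by
        rw [Finset.card_erase_of_mem ht₀, hS]
        exact Nat.sub_add_cancel (Nat.mul_pos hv hk)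

end IsProjCube

theorem proj_indicator {n v : ℕ} (S : Finset (Fin n → Fin v)) (x y : Fin n) :
    proj n v (fun t => if t ∈ S then 1 else 0) x y =
      Matrix.of fun i j => (#{t ∈ S | t x = i ∧ t y = j} : ℤ) := by
  ext i j
  simp only [proj, Matrix.of_apply, Finset.sum_boole, Finset.filter_filter]
  congr 2
  ext t
  simp [and_comm]

def cube5Support : Finset (Fin 5 → Fin 3) :=
  {![0, 0, 0, 0, 0], ![0, 1, 1, 1, 1], ![1, 0, 1, 2, 2],
   ![1, 2, 2, 0, 1], ![2, 1, 2, 2, 0], ![2, 2, 0, 1, 2]}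

theorem isProjCube_cube5Support :
    IsProjCube 5 3 2 1 fun t => if t ∈ cube5Support then 1 else 0 := by
  refine ⟨fun t => by by_cases h : t ∈ cube5Support <;> simp [h], fun x y _ => ?_⟩
  rw [proj_indicator]
  unfold IsSymDesign
  simp only [Matrix.of_apply]
  revert x y
  decide

theorem projCube_321 :
    (∀ n : ℕ, 6 ≤ n → ∀ C : (Fin n → Fin 3) → ℤ, ¬ IsProjCube n 3 2 1 C) ∧
    (∃ C : (Fin 5 → Fin 3) → ℤ, IsProjCube 5 3 2 1 C ∧
      ∀ t : Fin 5 → Fin 3, C t = 1 ↔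
        t ∈ ({![0, 0, 0, 0, 0], ![0, 1, 1, 1, 1], ![1, 0, 1, 2, 2],
              ![1, 2, 2, 0, 1], ![2, 1, 2, 2, 0], ![2, 2, 0, 1, 2]} :
            Finset (Fin 5 → Fin 3))) := by
  refine ⟨fun n hn C hC => ?_, _, isProjCube_cube5Support, fun t => ?_⟩
  · have := hC.mul_sub_one_add_one_le (by norm_num) (by omega) (by norm_num) (by norm_num)
    omega
  · simp only [ite_eq_left_iff, zero_ne_one, imp_false, not_not]
    rfl
end
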